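/- In CCTL*, every formula is equivalent to a formula in simple form, where a state formula is in simple form if every occurrence of the path quantifier E is immediately preceded by the counting operator D^1 (i.e., state formulas are generated by φ ::= ⊤ | p | ¬φ | φ∧φ | D^1 E ψ | D^n φ). In particular, for path formulas ψ₁, ψ₂ and a propositional formula χ, the following equivalence holds over all Kripke trees: E(⋀_{j=1}^m D^{m_j}φ_j ∧ ⋀_{j=1}^n ¬D^{n_j}θ_j ∧ ⋀_{j=1}^p X ξ_j ∧ χ) is equivalent to ⋀_{j=1}^m D^{m_j}φ_j ∧ ⋀_{j=1}^n ¬D^{n_j}θ_j ∧ D^1 E(⋀_{j=1}^p ξ_j) ∧ χ. -/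

import Mathlib

mutual
/-- State formulas of Counting-CTL* (CCTL*). -/
inductive SForm (AP : Type) : Type where
  | top : SForm AP
  | atom : AP → SForm AP
  | not : SForm AP → SForm AP
  | and : SForm AP → SForm AP → SForm AP
  | ex : PForm AP → SForm AP
  | cnt : ℕ → SForm AP → SForm AP
/-- Path formulas of Counting-CTL* (CCTL*). -/
inductive PForm (AP : Type) : Type where
  | state : SForm AP → PForm AP
  | not : PForm AP → PForm AP
  | and : PForm AP → PForm AP → PForm AP
  | next : PForm AP → PForm AP
  | until_ : PForm AP → PForm AP → PForm AP
end

/-- `T` is a tree: nonempty and prefix-closed. -/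
def IsTree {D : Type} (T : Set (List D)) : Prop :=
  [] ∈ T ∧ ∀ (w : List D) (d : D), w ++ [d] ∈ T → w ∈ T

/-- Every node of `T` has a child. -/
def NonBlocking {D : Type} (T : Set (List D)) : Prop :=
  ∀ w ∈ T, ∃ d : D, w ++ [d] ∈ T

/-- `π` is an infinite path of `T` starting at node `w`. -/
def IsPathFrom {D : Type} (T : Set (List D)) (π : ℕ → List D) (w : List D) : Prop :=
  π 0 = w ∧ ∀ i, π i ∈ T ∧ ∃ d : D, π (i + 1) = π i ++ [d]

mutual
/-- Satisfaction of a CCTL* state formula at a node of the Kripke tree `(T, Lab)`. -/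
def SatS {D AP : Type} (T : Set (List D)) (Lab : List D → Set AP) :
    SForm AP → List D → Prop
  | .top, _ => True
  | .atom p, w => p ∈ Lab w
  | .not φ, w => ¬ SatS T Lab φ w
  | .and φ ψ, w => SatS T Lab φ w ∧ SatS T Lab ψ w
  | .ex ψ, w => ∃ π : ℕ → List D, IsPathFrom T π w ∧ SatP T Lab ψ π 0
  | .cnt k φ, w => ∃ s : Finset D, k ≤ s.card ∧
      ∀ d ∈ s, w ++ [d] ∈ T ∧ SatS T Lab φ (w ++ [d])
/-- Satisfaction of a CCTL* path formula at position `i` of the infinite path `π`. -/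
def SatP {D AP : Type} (T : Set (List D)) (Lab : List D → Set AP) :
    PForm AP → (ℕ → List D) → ℕ → Prop
  | .state φ, π, i => SatS T Lab φ (π i)
  | .not ψ, π, i => ¬ SatP T Lab ψ π i
  | .and ψ χ, π, i => SatP T Lab ψ π i ∧ SatP T Lab χ π i
  | .next ψ, π, i => SatP T Lab ψ π (i + 1)
  | .until_ ψ χ, π, i =>
      ∃ j, i ≤ j ∧ SatP T Lab χ π j ∧ ∀ k, i ≤ k → k < j → SatP T Lab ψ π k
end

mutual
/-- Length (number of symbols) of a CCTL* state formula. -/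
def sizeS {AP : Type} : SForm AP → ℕ
  | .top => 1
  | .atom _ => 1
  | .not φ => 1 + sizeS φ
  | .and φ ψ => 1 + sizeS φ + sizeS ψ
  | .ex ψ => 1 + sizeP ψ
  | .cnt _ φ => 1 + sizeS φ
/-- Length (number of symbols) of a CCTL* path formula. -/
def sizeP {AP : Type} : PForm AP → ℕ
  | .state φ => sizeS φ
  | .not ψ => 1 + sizeP ψ
  | .and ψ χ => 1 + sizeP ψ + sizeP χ
  | .next ψ => 1 + sizeP ψ
  | .until_ ψ χ => 1 + sizeP ψ + sizeP χ
end

mutual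
/-- CCTL* state formulas in simple form: every occurrence of the path
quantifier `E` is immediately preceded by the counting operator `D^1`. -/
inductive SimpleS {AP : Type} : SForm AP → Prop
  | top : SimpleS .top
  | atom (p : AP) : SimpleS (.atom p)
  | not {φ} : SimpleS φ → SimpleS (.not φ)
  | and {φ ψ} : SimpleS φ → SimpleS ψ → SimpleS (.and φ ψ)
  | cntE {ψ} : SimpleP ψ → SimpleS (.cnt 1 (.ex ψ))
  | cnt {n φ} : SimpleS φ → SimpleS (.cnt n φ)
/-- CCTL* path formulas in simple form. -/
inductive SimpleP {AP : Type} : PForm AP → Prop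
  | state {φ} : SimpleS φ → SimpleP (.state φ)
  | not {ψ} : SimpleP ψ → SimpleP (.not ψ)
  | and {ψ χ} : SimpleP ψ → SimpleP χ → SimpleP (.and ψ χ)
  | next {ψ} : SimpleP ψ → SimpleP (.next ψ)
  | until_ {ψ χ} : SimpleP ψ → SimpleP χ → SimpleP (.until_ ψ χ)
end

/-- Propositional state formulas. -/
inductive Prp {AP : Type} : SForm AP → Prop
  | top : Prp .top
  | atom (p : AP) : Prp (.atom p)
  | not {φ} : Prp φ → Prp (.not φ)
  | and {φ ψ} : Prp φ → Prp ψ → Prp (.and φ ψ)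

/-- Conjunction of a list of path formulas. -/
def pconj {AP : Type} : List (PForm AP) → PForm AP
  | [] => .state .top
  | ψ :: l => .and ψ (pconj l)

/-- Conjunction of a list of state formulas. -/
def sconj {AP : Type} : List (SForm AP) → SForm AP
  | [] => .top
  | φ :: l => .and φ (sconj l)

/-!
A path formula `ψ` splits into what it says about the current node and what it says about
the rest of the path, `ψ ≡ ⋁ᵢ (σᵢ ∧ X ξᵢ)` with state formulas `σᵢ`: by induction on `ψ`,
using De Morgan and distributivity for `¬` and `∧`, and `ψ₁ U ψ₂ ≡ ψ₂ ∨ (ψ₁ ∧ X (ψ₁ U ψ₂))`.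
Since `E` commutes with `∨`, pulls state formulas out, and `E (X ξ) ≡ D¹ E ξ` at a node of
the tree, this gives `E ψ ≡ ⋁ᵢ (σᵢ ∧ D¹ E ξᵢ)`. Applied bottom-up, this yields the simple
form; the displayed equivalence is the same computation for one particular conjunction.
-/

def sdisj {AP : Type} : List (SForm AP) → SForm AP
  | [] => .not .top
  | φ :: l => .not (.and (.not φ) (.not (sdisj l)))

theorem simpleS_sdisj {AP : Type} {l : List (SForm AP)} (h : ∀ φ ∈ l, SimpleS φ) :
    SimpleS (sdisj l) := by
  induction l with
  | nil => exact .not .top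
  | cons φ l ih =>
    simp only [List.mem_cons, forall_eq_or_imp] at h
    exact .not (.and (.not h.1) (.not (ih h.2)))

section Semantics

variable {D AP : Type} (T : Set (List D)) (Lab : List D → Set AP)

theorem satS_sconj (l : List (SForm AP)) (w : List D) :
    SatS T Lab (sconj l) w ↔ ∀ φ ∈ l, SatS T Lab φ w := by
  induction l with
  | nil => simp [sconj, SatS]
  | cons φ l ih => simp [sconj, SatS, ih]

theorem satS_sdisj (l : List (SForm AP)) (w : List D) :
    SatS T Lab (sdisj l) w ↔ ∃ φ ∈ l, SatS T Lab φ w := by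
  induction l with
  | nil => simp [sdisj, SatS]
  | cons φ l ih => simp [sdisj, SatS, ih, imp_iff_not_or]

theorem satP_pconj (l : List (PForm AP)) (π : ℕ → List D) (i : ℕ) :
    SatP T Lab (pconj l) π i ↔ ∀ ψ ∈ l, SatP T Lab ψ π i := by
  induction l with
  | nil => simp [pconj, SatP, SatS]
  | cons ψ l ih => simp [pconj, SatP, ih]

theorem satP_shift :
    ∀ (ψ : PForm AP) (π : ℕ → List D) (i : ℕ),
      SatP T Lab ψ (fun j => π (j + 1)) i ↔ SatP T Lab ψ π (i + 1)
  | .state φ, π, i => by simp [SatP]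
  | .not ψ, π, i => by simp [SatP, satP_shift ψ π i]
  | .and ψ χ, π, i => by simp [SatP, satP_shift ψ π i, satP_shift χ π i]
  | .next ψ, π, i => by simp [SatP, satP_shift ψ π (i + 1)]
  | .until_ ψ χ, π, i => by
      simp only [SatP]
      constructor
      · rintro ⟨j, hij, hχ, hψ⟩
        refine ⟨j + 1, by omega, (satP_shift χ π j).1 hχ, fun k hik hkj => ?_⟩
        obtain ⟨k, rfl⟩ : ∃ k', k = k' + 1 := ⟨k - 1, by omega⟩
        exact (satP_shift ψ π k).1 (hψ k (by omega) (by omega))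
      · rintro ⟨j, hij, hχ, hψ⟩
        obtain ⟨j, rfl⟩ : ∃ j', j = j' + 1 := ⟨j - 1, by omega⟩
        exact ⟨j, by omega, (satP_shift χ π j).2 hχ, fun k hik hkj =>
          (satP_shift ψ π k).2 (hψ (k + 1) (by omega) (by omega))⟩

theorem satP_until_iff (ψ χ : PForm AP) (π : ℕ → List D) (i : ℕ) :
    SatP T Lab (.until_ ψ χ) π i ↔
      SatP T Lab χ π i ∨ (SatP T Lab ψ π i ∧ SatP T Lab (.until_ ψ χ) π (i + 1)) := by
  simp only [SatP]
  constructor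
  · rintro ⟨j, hij, hχ, hψ⟩
    rcases hij.eq_or_lt with rfl | hij
    · exact .inl hχ
    · exact .inr ⟨hψ i le_rfl hij, j, hij, hχ, fun k hik hkj => hψ k (by omega) hkj⟩
  · rintro (hχ | ⟨hψi, j, hij, hχ, hψ⟩)
    · exact ⟨i, le_rfl, hχ, fun k hik hki => absurd hki (by omega)⟩
    · refine ⟨j, by omega, hχ, fun k hik hkj => ?_⟩
      rcases hik.eq_or_lt with rfl | hik
      · exact hψi
      · exact hψ k hik hkj

theorem satS_cnt_one_ex_iff {w : List D} (hw : w ∈ T) (ξ : PForm AP) :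
    SatS T Lab (.cnt 1 (.ex ξ)) w ↔ ∃ π, IsPathFrom T π w ∧ SatP T Lab ξ π 1 := by
  simp only [SatS]
  constructor
  · rintro ⟨s, hs, hchild⟩
    obtain ⟨d, hd⟩ := Finset.card_pos.mp hs
    obtain ⟨-, π, ⟨hπ0, hπ⟩, hξ⟩ := hchild d hd
    let π' : ℕ → List D := fun | 0 => w | j + 1 => π j
    refine ⟨π', ⟨rfl, ?_⟩, (satP_shift T Lab ξ π' 0).1 hξ⟩
    rintro (_ | j)
    · exact ⟨hw, d, hπ0⟩
    · exact hπ j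
  · rintro ⟨π, ⟨hπ0, hπ⟩, hξ⟩
    obtain ⟨d, hd⟩ := (hπ 0).2
    refine ⟨{d}, by simp, fun e he => ?_⟩
    rw [Finset.mem_singleton.1 he, ← hπ0, ← hd]
    exact ⟨(hπ 1).1, fun j => π (j + 1), ⟨rfl, fun j => hπ (j + 1)⟩,
      (satP_shift T Lab ξ π 0).2 hξ⟩

theorem exists_isPathFrom_now_next_iff {w : List D} (hw : w ∈ T) (P : List D → Prop)
    (ξ : PForm AP) :
    (∃ π, IsPathFrom T π w ∧ P (π 0) ∧ SatP T Lab ξ π 1) ↔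
      P w ∧ SatS T Lab (.cnt 1 (.ex ξ)) w := by
  rw [satS_cnt_one_ex_iff T Lab hw]
  constructor
  · rintro ⟨π, hπ, hP, hξ⟩
    exact ⟨hπ.1 ▸ hP, π, hπ, hξ⟩
  · rintro ⟨hP, π, hπ, hξ⟩
    exact ⟨π, hπ, hπ.1 ▸ hP, hξ⟩

end Semantics

section NowNext

variable {D AP : Type}

/-- The list `[(σ₁, ξ₁), …, (σₙ, ξₙ)]` stands for the path formula `⋁ᵢ (σᵢ ∧ X ξᵢ)`. -/
def SatNowNext (T : Set (List D)) (Lab : List D → Set AP) (L : List (SForm AP × PForm AP))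
    (π : ℕ → List D) (i : ℕ) : Prop :=
  ∃ p ∈ L, SatS T Lab p.1 (π i) ∧ SatP T Lab p.2 π (i + 1)

def SimpleNowNext (L : List (SForm AP × PForm AP)) : Prop :=
  ∀ p ∈ L, SimpleS p.1 ∧ SimpleP p.2

def andNowNext (L M : List (SForm AP × PForm AP)) : List (SForm AP × PForm AP) :=
  L.flatMap fun p => M.map fun q => (p.1.and q.1, p.2.and q.2)

/-- Uses `¬(σ ∧ X ξ) ≡ (σ ∧ X ¬ξ) ∨ (¬σ ∧ X ⊤)`. -/
def negNowNext : List (SForm AP × PForm AP) → List (SForm AP × PForm AP)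
  | [] => [(.top, .state .top)]
  | (σ, ξ) :: L => andNowNext [(σ, .not ξ), (.not σ, .state .top)] (negNowNext L)

def nowNext : PForm AP → List (SForm AP × PForm AP)
  | .state φ => [(φ, .state .top)]
  | .not ψ => negNowNext (nowNext ψ)
  | .and ψ χ => andNowNext (nowNext ψ) (nowNext χ)
  | .next ψ => [(.top, ψ)]
  | .until_ ψ χ => nowNext χ ++ andNowNext (nowNext ψ) [(.top, .until_ ψ χ)]

section Semantics

variable (T : Set (List D)) (Lab : List D → Set AP) (π : ℕ → List D) (i : ℕ)

theorem satNowNext_nil : ¬ SatNowNext T Lab [] π i := by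
  simp [SatNowNext]

theorem satNowNext_cons (σ : SForm AP) (ξ : PForm AP) (L : List (SForm AP × PForm AP)) :
    SatNowNext T Lab ((σ, ξ) :: L) π i ↔
      (SatS T Lab σ (π i) ∧ SatP T Lab ξ π (i + 1)) ∨ SatNowNext T Lab L π i := by
  simp [SatNowNext]

theorem satNowNext_append (L M : List (SForm AP × PForm AP)) :
    SatNowNext T Lab (L ++ M) π i ↔ SatNowNext T Lab L π i ∨ SatNowNext T Lab M π i := by
  simp only [SatNowNext, List.mem_append, or_and_right, exists_or]

theorem satNowNext_andNowNext (L M : List (SForm AP × PForm AP)) :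
    SatNowNext T Lab (andNowNext L M) π i ↔
      SatNowNext T Lab L π i ∧ SatNowNext T Lab M π i := by
  simp only [SatNowNext, andNowNext, List.mem_flatMap, List.mem_map]
  constructor
  · rintro ⟨_, ⟨p, hp, q, hq, rfl⟩, ⟨hp1, hq1⟩, hp2, hq2⟩
    exact ⟨⟨p, hp, hp1, hp2⟩, ⟨q, hq, hq1, hq2⟩⟩
  · rintro ⟨⟨p, hp, hp1, hp2⟩, ⟨q, hq, hq1, hq2⟩⟩
    exact ⟨_, ⟨p, hp, q, hq, rfl⟩, ⟨hp1, hq1⟩, hp2, hq2⟩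

theorem satNowNext_negNowNext (L : List (SForm AP × PForm AP)) :
    SatNowNext T Lab (negNowNext L) π i ↔ ¬ SatNowNext T Lab L π i := by
  induction L with
  | nil => simp [negNowNext, SatNowNext, SatS, SatP]
  | cons p L ih =>
    obtain ⟨σ, ξ⟩ := p
    simp only [negNowNext, satNowNext_andNowNext, ih, satNowNext_cons, satNowNext_nil, SatS,
      SatP]
    tauto

theorem satP_iff_satNowNext_nowNext :
    ∀ ψ : PForm AP, SatP T Lab ψ π i ↔ SatNowNext T Lab (nowNext ψ) π i
  | .state φ => by simp [nowNext, SatNowNext, SatP, SatS]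
  | .not ψ => by
    rw [nowNext, satNowNext_negNowNext, SatP, satP_iff_satNowNext_nowNext ψ]
  | .and ψ χ => by
    rw [nowNext, satNowNext_andNowNext, SatP, satP_iff_satNowNext_nowNext ψ,
      satP_iff_satNowNext_nowNext χ]
  | .next ψ => by simp [nowNext, SatNowNext, SatP, SatS]
  | .until_ ψ χ => by
    rw [nowNext, satNowNext_append, satNowNext_andNowNext, satP_until_iff,
      satP_iff_satNowNext_nowNext ψ, satP_iff_satNowNext_nowNext χ]
    simp [SatNowNext, SatS]

end Semantics

theorem simpleNowNext_append {L M : List (SForm AP × PForm AP)} (hL : SimpleNowNext L)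
    (hM : SimpleNowNext M) : SimpleNowNext (L ++ M) :=
  fun p hp => (List.mem_append.1 hp).elim (hL p) (hM p)

theorem simpleNowNext_andNowNext {L M : List (SForm AP × PForm AP)} (hL : SimpleNowNext L)
    (hM : SimpleNowNext M) : SimpleNowNext (andNowNext L M) := by
  simp only [SimpleNowNext, andNowNext, List.mem_flatMap, List.mem_map]
  rintro _ ⟨p, hp, q, hq, rfl⟩
  exact ⟨.and (hL p hp).1 (hM q hq).1, .and (hL p hp).2 (hM q hq).2⟩

theorem simpleNowNext_negNowNext {L : List (SForm AP × PForm AP)} (hL : SimpleNowNext L) :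
    SimpleNowNext (negNowNext L) := by
  induction L with
  | nil => simpa [negNowNext, SimpleNowNext] using And.intro SimpleS.top (SimpleP.state .top)
  | cons p L ih =>
    obtain ⟨σ, ξ⟩ := p
    simp only [SimpleNowNext, List.mem_cons, forall_eq_or_imp] at hL
    refine simpleNowNext_andNowNext ?_ (ih hL.2)
    simpa [SimpleNowNext] using
      ⟨⟨hL.1.1, .not hL.1.2⟩, ⟨.not hL.1.1, .state .top⟩⟩

theorem simpleNowNext_nowNext : ∀ {ψ : PForm AP}, SimpleP ψ → SimpleNowNext (nowNext ψ)
  | .state _, .state hφ => by simpa [nowNext, SimpleNowNext] using ⟨hφ, .state .top⟩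
  | .not _, .not hψ => simpleNowNext_negNowNext (simpleNowNext_nowNext hψ)
  | .and _ _, .and hψ hχ =>
      simpleNowNext_andNowNext (simpleNowNext_nowNext hψ) (simpleNowNext_nowNext hχ)
  | .next _, .next hψ => by simpa [nowNext, SimpleNowNext] using ⟨.top, hψ⟩
  | .until_ _ _, .until_ hψ hχ =>
      simpleNowNext_append (simpleNowNext_nowNext hχ) <|
        simpleNowNext_andNowNext (simpleNowNext_nowNext hψ) <| by
          simpa [SimpleNowNext] using ⟨.top, .until_ hψ hχ⟩

end NowNext

theorem satS_ex_iff_satS_sdisj_nowNext {D AP : Type} (T : Set (List D))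
    (Lab : List D → Set AP) {w : List D} (hw : w ∈ T) (ψ : PForm AP) :
    SatS T Lab (.ex ψ) w ↔
      SatS T Lab (sdisj ((nowNext ψ).map fun p => .and p.1 (.cnt 1 (.ex p.2)))) w := by
  have hsplit : ∀ p : SForm AP × PForm AP,
      (∃ π, IsPathFrom T π w ∧ SatS T Lab p.1 (π 0) ∧ SatP T Lab p.2 π 1) ↔
        SatS T Lab (.and p.1 (.cnt 1 (.ex p.2))) w :=
    fun p => exists_isPathFrom_now_next_iff T Lab hw (SatS T Lab p.1) p.2
  simp only [satS_sdisj, List.mem_map, exists_exists_and_eq_and, ← hsplit]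
  rw [SatS]
  constructor
  · rintro ⟨π, hπ, hψ⟩
    obtain ⟨p, hp, hnow⟩ := (satP_iff_satNowNext_nowNext T Lab π 0 ψ).1 hψ
    exact ⟨p, hp, π, hπ, hnow⟩
  · rintro ⟨p, hp, π, hπ, hnow⟩
    exact ⟨π, hπ, (satP_iff_satNowNext_nowNext T Lab π 0 ψ).2 ⟨p, hp, hnow⟩⟩

mutual

def SForm.simplify {AP : Type} : SForm AP → SForm AP
  | .top => .top
  | .atom p => .atom p
  | .not φ => .not φ.simplify
  | .and φ ψ => .and φ.simplify ψ.simplify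
  | .ex ψ => sdisj ((nowNext ψ.simplify).map fun p => .and p.1 (.cnt 1 (.ex p.2)))
  | .cnt k φ => .cnt k φ.simplify

def PForm.simplify {AP : Type} : PForm AP → PForm AP
  | .state φ => .state φ.simplify
  | .not ψ => .not ψ.simplify
  | .and ψ χ => .and ψ.simplify χ.simplify
  | .next ψ => .next ψ.simplify
  | .until_ ψ χ => .until_ ψ.simplify χ.simplify

end

mutual

theorem SForm.simpleS_simplify {AP : Type} : ∀ φ : SForm AP, SimpleS φ.simplify
  | .top => .top
  | .atom p => .atom p
  | .not φ => .not φ.simpleS_simplify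
  | .and φ ψ => .and φ.simpleS_simplify ψ.simpleS_simplify
  | .ex ψ => simpleS_sdisj <| by
      simp only [List.mem_map]
      rintro _ ⟨p, hp, rfl⟩
      have hp := simpleNowNext_nowNext ψ.simpleP_simplify p hp
      exact .and hp.1 (.cntE hp.2)
  | .cnt _ φ => .cnt φ.simpleS_simplify

theorem PForm.simpleP_simplify {AP : Type} : ∀ ψ : PForm AP, SimpleP ψ.simplify
  | .state φ => .state φ.simpleS_simplify
  | .not ψ => .not ψ.simpleP_simplify
  | .and ψ χ => .and ψ.simpleP_simplify χ.simpleP_simplify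
  | .next ψ => .next ψ.simpleP_simplify
  | .until_ ψ χ => .until_ ψ.simpleP_simplify χ.simpleP_simplify

end

section Simplify

variable {D AP : Type} (T : Set (List D)) (Lab : List D → Set AP)

mutual

theorem SForm.satS_simplify : ∀ (φ : SForm AP) {w : List D}, w ∈ T →
    (SatS T Lab φ.simplify w ↔ SatS T Lab φ w)
  | .top, _, _ => .rfl
  | .atom _, _, _ => .rfl
  | .not φ, _, hw => not_congr (φ.satS_simplify hw)
  | .and φ ψ, _, hw => and_congr (φ.satS_simplify hw) (ψ.satS_simplify hw)
  | .ex ψ, w, hw => by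
      rw [SForm.simplify, ← satS_ex_iff_satS_sdisj_nowNext T Lab hw]
      exact exists_congr fun π => and_congr_right fun hπ =>
        ψ.satP_simplify (fun i => (hπ.2 i).1) 0
  | .cnt _ φ, _, _ => exists_congr fun _ => and_congr_right fun _ =>
      forall₂_congr fun _ _ => and_congr_right fun hd => φ.satS_simplify hd

theorem PForm.satP_simplify : ∀ (ψ : PForm AP) {π : ℕ → List D}, (∀ i, π i ∈ T) → ∀ i,
    (SatP T Lab ψ.simplify π i ↔ SatP T Lab ψ π i)
  | .state φ, _, hπ, i => φ.satS_simplify (hπ i)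
  | .not ψ, _, hπ, i => not_congr (ψ.satP_simplify hπ i)
  | .and ψ χ, _, hπ, i => and_congr (ψ.satP_simplify hπ i) (χ.satP_simplify hπ i)
  | .next ψ, _, hπ, i => ψ.satP_simplify hπ (i + 1)
  | .until_ ψ χ, _, hπ, _ => exists_congr fun j => and_congr_right fun _ =>
      and_congr (χ.satP_simplify hπ j) (forall_congr' fun k => by rw [ψ.satP_simplify hπ k])

end

end Simplify

theorem satS_ex_pconj_iff_satS_sconj {D AP : Type} (T : Set (List D)) (Lab : List D → Set AP)
    {w : List D} (hw : w ∈ T) (A B : List (ℕ × SForm AP)) (Ξ : List (PForm AP))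
    (χ : SForm AP) :
    SatS T Lab
        (.ex (pconj ((A.map fun a => PForm.state (.cnt a.1 a.2)) ++
          (B.map fun b => PForm.state (.not (.cnt b.1 b.2))) ++
          (Ξ.map PForm.next) ++ [PForm.state χ]))) w ↔
      SatS T Lab
        (sconj ((A.map fun a => SForm.cnt a.1 a.2) ++
          (B.map fun b => SForm.not (.cnt b.1 b.2)) ++
          [SForm.cnt 1 (.ex (pconj Ξ)), χ])) w := by
  simp only [satS_sconj, List.forall_mem_append, List.forall_mem_map, List.forall_mem_cons,
    satS_cnt_one_ex_iff T Lab hw]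
  simp only [SatS, satP_pconj, List.forall_mem_append, List.forall_mem_map,
    List.forall_mem_cons, List.not_mem_nil, IsEmpty.forall_iff, implies_true, and_true, SatP]
  constructor
  · rintro ⟨π, hπ, ⟨⟨hA, hB⟩, hΞ⟩, hχ⟩
    rw [hπ.1] at hA hB hχ
    exact ⟨⟨hA, hB⟩, ⟨π, hπ, hΞ⟩, hχ⟩
  · rintro ⟨⟨hA, hB⟩, ⟨π, hπ, hΞ⟩, hχ⟩
    refine ⟨π, hπ, ?_⟩
    rw [hπ.1]
    exact ⟨⟨⟨hA, hB⟩, hΞ⟩, hχ⟩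

/-- (a) Every CCTL* state formula is equivalent (over all nonblocking Kripke
trees) to one in simple form.  (b) The key equivalence: for counting formulas
`D^{m_j} φ_j` (given by `A`), negated counting formulas `¬D^{n_j} θ_j` (given
by `B`), next-formulas `X ξ_j` (given by `Ξ`), and a propositional `χ`,
`E(⋀_j D^{m_j}φ_j ∧ ⋀_j ¬D^{n_j}θ_j ∧ ⋀_j X ξ_j ∧ χ)` is equivalent to
`⋀_j D^{m_j}φ_j ∧ ⋀_j ¬D^{n_j}θ_j ∧ D^1 E(⋀_j ξ_j) ∧ χ`. -/
theorem stmt16 (AP : Type) :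
    (∀ φ : SForm AP, ∃ φ' : SForm AP, SimpleS φ' ∧
      ∀ (D : Type) (T : Set (List D)) (Lab : List D → Set AP),
        IsTree T → NonBlocking T → ∀ w ∈ T,
          (SatS T Lab φ w ↔ SatS T Lab φ' w)) ∧
    (∀ (A B : List (ℕ × SForm AP)) (Ξ : List (PForm AP)) (χ : SForm AP),
      Prp χ →
      ∀ (D : Type) (T : Set (List D)) (Lab : List D → Set AP),
        IsTree T → NonBlocking T → ∀ w ∈ T,
        (SatS T Lab
          (.ex (pconj ((A.map fun a => PForm.state (.cnt a.1 a.2)) ++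
                       (B.map fun b => PForm.state (.not (.cnt b.1 b.2))) ++
                       (Ξ.map PForm.next) ++ [PForm.state χ]))) w
          ↔
        SatS T Lab
          (sconj ((A.map fun a => SForm.cnt a.1 a.2) ++
                  (B.map fun b => SForm.not (.cnt b.1 b.2)) ++
                  [SForm.cnt 1 (.ex (pconj Ξ)), χ])) w)) :=
  ⟨fun φ => ⟨φ.simplify, φ.simpleS_simplify,
      fun _ T Lab _ _ _ hw => (φ.satS_simplify T Lab hw).symm⟩,
    fun A B Ξ χ _ _ T Lab _ _ _ hw => satS_ex_pconj_iff_satS_sconj T Lab hw A B Ξ χ⟩
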